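/- arXiv:2303.16308 — 2 statements merged into one kernel-verified Lean document; each statement's English description precedes it below -/
import Mathlib

section
/- Let x_1, …, x_t ∈ 𝒳 be a data stream and for each i ∈ {1,…,t} and k ∈ {1,…,w} let x_i^k ∈ 𝒳 be the k-th perturbed instance of x_i, satisfying the average-perturbation constraint (1/(w·t)) Σ_{i=1}^t Σ_{k=1}^w d(x_i, x_i^k) ≤ ε for some ε ≥ 0. Let Z̃ be the overall smoothed performance on the clean windows W_i and Z̃' the overall smoothed performance on the corrupted windows W'_i. Then |Z̃ − Z̃'| ≤ w · ψ(ε). In particular, if Z̃_ε denotes the infimum of Z̃' over all perturbations satisfying the constraint, then |Z̃ − Z̃_ε| ≤ w · ψ(ε). -/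
/-!
For a test function with values in `[0, 1]`, the layer-cake formula writes a difference of
integrals as an integral over levels `u ∈ (0, 1]` of differences of measures of superlevel sets,
so it is at most the total variation distance. Replacing the factors of a product measure one at
a time then bounds the change of each smoothed window by `∑ⱼ ψ (d (xⱼ, x'ⱼ))` over its entries.
Every perturbed instance `x_m^k` occurs in at most one corrupted window, so the total change is at
most `∑_{m,k} ψ (d (x_m, x_m^k))`, and Jensen's inequality for the concave nondecreasing `ψ` bounds
this by `w t ψ ε`.
-/

open MeasureTheory

/-- Total variation distance between two measures:
`TV(μ, ν) = sup over measurable sets A of |μ(A) − ν(A)|`. -/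
noncomputable def tvDist {X : Type*} [MeasurableSpace X] (μ ν : Measure X) : ℝ :=
  ⨆ A : {A : Set X // MeasurableSet A}, |(μ A.1).toReal - (ν A.1).toReal|

/-- The smoothed performance: the integral of `f` against the product of the smoothing
distributions `S` applied to the entries of the window `W`. -/
noncomputable def smoothed {X : Type*} [MeasurableSpace X] (S : X → Measure X)
    {s : ℕ} (f : (Fin s → X) → ℝ) (W : Fin s → X) : ℝ :=
  ∫ y, f y ∂(Measure.pi fun j => S (W j))

/-- The clean sliding window at time step `i` over the stream `x`: with `s = min(i, w)`,
the window is `Wᵢ = (x_{i−s+1}, …, x_i)`. -/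
def window {X : Type*} (x : ℕ → X) (w i : ℕ) : Fin (min i w) → X :=
  fun j => x (i - min i w + 1 + (j : ℕ))

/-- The adversarially corrupted sliding window at time step `i`: with `s = min(i, w)`,
the window is `W'ᵢ = (x_{i−s+1}^{s}, x_{i−s+2}^{s−1}, …, x_i^{1})`, where `xa j k` is the
`k`-th perturbed instance of `x_j`. -/
def windowAdv {X : Type*} (xa : ℕ → ℕ → X) (w i : ℕ) : Fin (min i w) → X :=
  fun j => xa (i - min i w + 1 + (j : ℕ)) (min i w - (j : ℕ))

section TotalVariation

open Set

variable {X : Type*} [MeasurableSpace X]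

theorem abs_measure_sub_le_tvDist (μ ν : Measure X) [IsProbabilityMeasure μ]
    [IsProbabilityMeasure ν] {A : Set X} (hA : MeasurableSet A) :
    |(μ A).toReal - (ν A).toReal| ≤ tvDist μ ν :=
  le_ciSup (f := fun B : {B : Set X // MeasurableSet B} => |(μ B.1).toReal - (ν B.1).toReal|)
    ⟨1, by
      rintro _ ⟨B, rfl⟩
      exact abs_sub_le_of_nonneg_of_le measureReal_nonneg measureReal_le_one
        measureReal_nonneg measureReal_le_one⟩
    ⟨A, hA⟩

theorem integrable_of_mem_Icc_zero_one {α : Type*} [MeasurableSpace α] {κ : Measure α}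
    [IsFiniteMeasure κ] {f : α → ℝ} (hf : Measurable f) (hf01 : ∀ x, f x ∈ Icc 0 1) :
    Integrable f κ :=
  .of_bound hf.aestronglyMeasurable 1 <| ae_of_all _ fun x =>
    abs_le.2 ⟨by linarith [(hf01 x).1], (hf01 x).2⟩

theorem integral_eq_integral_Ioc_measureReal_lt (κ : Measure X) [IsFiniteMeasure κ]
    {f : X → ℝ} (hf : Measurable f) (hf01 : ∀ x, f x ∈ Icc 0 1) :
    ∫ x, f x ∂κ = ∫ u in Ioc 0 1, κ.real {x | u < f x} := by
  rw [(integrable_of_mem_Icc_zero_one hf hf01).integral_eq_integral_meas_lt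
    (ae_of_all _ fun x => (hf01 x).1)]
  refine setIntegral_eq_of_subset_of_forall_sdiff_eq_zero measurableSet_Ioi
    Ioc_subset_Ioi_self fun u hu => ?_
  have hempty : {x | u < f x} = ∅ :=
    eq_empty_of_forall_notMem fun x hx => hu.2 ⟨hu.1, hx.le.trans (hf01 x).2⟩
  simp [hempty]

theorem abs_integral_sub_le_tvDist (μ ν : Measure X) [IsProbabilityMeasure μ]
    [IsProbabilityMeasure ν] {f : X → ℝ} (hf : Measurable f) (hf01 : ∀ x, f x ∈ Icc 0 1) :
    |∫ x, f x ∂μ - ∫ x, f x ∂ν| ≤ tvDist μ ν := by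
  have htail (κ : Measure X) [IsFiniteMeasure κ] :
      IntegrableOn (fun u => κ.real {x | u < f x}) (Ioc 0 1) :=
    have hanti : AntitoneOn (fun u => κ.real {x | u < f x}) (Icc 0 1) := fun u _ v _ huv =>
      measureReal_mono fun x (hx : v < f x) => huv.trans_lt hx
    (hanti.integrableOn_isCompact isCompact_Icc).mono_set Ioc_subset_Icc_self
  rw [integral_eq_integral_Ioc_measureReal_lt μ hf hf01,
    integral_eq_integral_Ioc_measureReal_lt ν hf hf01, ← integral_sub (htail μ) (htail ν)]
  have hbound := norm_setIntegral_le_of_norm_le_const (μ := volume) (s := Ioc (0 : ℝ) 1)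
    (f := fun u => μ.real {x | u < f x} - ν.real {x | u < f x}) (by simp)
    fun u _ => abs_measure_sub_le_tvDist μ ν (measurableSet_lt measurable_const hf)
  simpa [Real.volume_Ioc] using hbound

end TotalVariation

section Pi

open Set

theorem integral_pi_eq_integral_integral_insertNth {n : ℕ} {α : Fin (n + 1) → Type*}
    [∀ j, MeasurableSpace (α j)] {E : Type*} [NormedAddCommGroup E] [NormedSpace ℝ E]
    (μ : ∀ j, Measure (α j)) [∀ j, SigmaFinite (μ j)] (i : Fin (n + 1))
    {f : (∀ j, α j) → E} (hf : Integrable f (Measure.pi μ)) :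
    ∫ y, f y ∂Measure.pi μ =
      ∫ a, ∫ z, f (i.insertNth a z) ∂Measure.pi (fun j => μ (i.succAbove j)) ∂μ i := by
  have he := (measurePreserving_piFinSuccAbove μ i).symm
  rw [← he.integral_comp' f]
  exact integral_prod _ ((he.integrable_comp_emb (MeasurableEquiv.measurableEmbedding _)).2 hf)

variable {X : Type*} [MeasurableSpace X] {s : ℕ}

theorem abs_integral_pi_sub_integral_pi_update_le_tvDist (μ : Fin s → Measure X)
    [∀ j, IsProbabilityMeasure (μ j)] (i : Fin s) (κ : Measure X) [IsProbabilityMeasure κ]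
    {f : (Fin s → X) → ℝ} (hf : Measurable f) (hf01 : ∀ y, f y ∈ Icc 0 1) :
    |∫ y, f y ∂Measure.pi μ - ∫ y, f y ∂Measure.pi (Function.update μ i κ)| ≤
      tvDist (μ i) κ := by
  cases s with
  | zero => exact i.elim0
  | succ n =>
    have : ∀ j, IsProbabilityMeasure (Function.update μ i κ j) := by
      intro j; rcases eq_or_ne j i with rfl | hj <;> simp [*]
    set P := Measure.pi fun j => μ (i.succAbove j)
    set g : X → ℝ := fun a => ∫ z, f (i.insertNth a z) ∂P
    have hfm : Measurable fun p : X × (Fin n → X) => f (i.insertNth p.1 p.2) :=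
      hf.comp (MeasurableEquiv.piFinSuccAbove (fun _ => X) i).symm.measurable
    have hg01 : ∀ a, g a ∈ Icc 0 1 := fun a =>
      ⟨integral_nonneg fun z => (hf01 _).1, by
        simpa using integral_mono_of_nonneg (ae_of_all _ fun z => (hf01 _).1)
          (integrable_const (μ := P) (1 : ℝ)) (ae_of_all _ fun z => (hf01 (i.insertNth a z)).2)⟩
    have hupdate :
        (fun j => Function.update μ i κ (i.succAbove j)) = fun j => μ (i.succAbove j) :=
      funext fun j => Function.update_of_ne (i.succAbove_ne j) _ _
    rw [integral_pi_eq_integral_integral_insertNth μ i (integrable_of_mem_Icc_zero_one hf hf01),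
      integral_pi_eq_integral_integral_insertNth _ i (integrable_of_mem_Icc_zero_one hf hf01),
      hupdate, Function.update_self]
    exact abs_integral_sub_le_tvDist (μ i) κ
      hfm.stronglyMeasurable.integral_prod_right'.measurable hg01

end Pi

section Hybrid

open Set

variable {X : Type*} [MeasurableSpace X] {s : ℕ}

def piHybrid (μ ν : Fin s → Measure X) (k : ℕ) : Fin s → Measure X :=
  fun j => if (j : ℕ) < k then ν j else μ j

theorem piHybrid_succ (μ ν : Fin s → Measure X) (j : Fin s) :
    piHybrid μ ν (j + 1) = Function.update (piHybrid μ ν j) j (ν j) := by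
  funext l
  rcases eq_or_ne l j with rfl | hl
  · simp [piHybrid]
  · have : (l : ℕ) < j + 1 ↔ (l : ℕ) < j := by have := Fin.val_ne_of_ne hl; omega
    simp [piHybrid, Function.update_of_ne hl, this]

theorem abs_integral_pi_sub_le_sum_tvDist (μ ν : Fin s → Measure X)
    [∀ j, IsProbabilityMeasure (μ j)] [∀ j, IsProbabilityMeasure (ν j)]
    {f : (Fin s → X) → ℝ} (hf : Measurable f) (hf01 : ∀ y, f y ∈ Icc 0 1) :
    |∫ y, f y ∂Measure.pi μ - ∫ y, f y ∂Measure.pi ν| ≤ ∑ j, tvDist (μ j) (ν j) := by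
  have (k : ℕ) (j : Fin s) : IsProbabilityMeasure (piHybrid μ ν k j) := by
    unfold piHybrid; split <;> infer_instance
  set F : ℕ → ℝ := fun k => ∫ y, f y ∂Measure.pi (piHybrid μ ν k)
  have hF0 : F 0 = ∫ y, f y ∂Measure.pi μ := by
    simp only [F, show piHybrid μ ν 0 = μ from funext fun j => if_neg j.val.not_lt_zero]
  have hFs : F s = ∫ y, f y ∂Measure.pi ν := by
    simp only [F, show piHybrid μ ν s = ν from funext fun j => if_pos j.isLt]
  have hstep (j : Fin s) : dist (F j) (F (j + 1)) ≤ tvDist (μ j) (ν j) := by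
    have := abs_integral_pi_sub_integral_pi_update_le_tvDist (piHybrid μ ν j) j (ν j) hf hf01
    rwa [piHybrid, if_neg (lt_irrefl _), ← piHybrid_succ] at this
  calc |∫ y, f y ∂Measure.pi μ - ∫ y, f y ∂Measure.pi ν| = dist (F 0) (F s) := by
        rw [hF0, hFs, Real.dist_eq]
    _ ≤ ∑ k ∈ Finset.range s, dist (F k) (F (k + 1)) := dist_le_range_sum_dist F s
    _ = ∑ j : Fin s, dist (F j) (F (j + 1)) := Finset.sum_range _
    _ ≤ ∑ j, tvDist (μ j) (ν j) := Finset.sum_le_sum fun j _ => hstep j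

end Hybrid

open Finset

theorem sum_sum_window_le_sum_sum {g : ℕ → ℕ → ℝ} (hg : ∀ m k, 0 ≤ g m k) (w t : ℕ) :
    ∑ i ∈ Icc 1 t, ∑ j ∈ range (min i w), g (i - min i w + 1 + j) (min i w - j) ≤
      ∑ m ∈ Icc 1 t, ∑ k ∈ Icc 1 w, g m k := by
  set Sg := (Icc 1 t).sigma fun i => range (min i w)
  set e : (Σ _ : ℕ, ℕ) → ℕ × ℕ := fun σ => (σ.1 - min σ.1 w + 1 + σ.2, min σ.1 w - σ.2)
  -- the two coordinates of `e ⟨i, j⟩` add up to `i + 1`, so `i` and then `j` are recovered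
  have hinj : Set.InjOn e Sg := by
    rintro ⟨i, j⟩ hij ⟨i', j'⟩ hij' he
    simp only [Sg, coe_sigma, Set.mem_sigma_iff, coe_Icc, Set.mem_Icc, coe_range, Set.mem_Iio]
      at hij hij'
    simp only [e, Prod.mk.injEq] at he
    obtain rfl : i = i' := by omega
    obtain rfl : j = j' := by omega
    rfl
  have hmaps : Sg.image e ⊆ Icc 1 t ×ˢ Icc 1 w := by
    rintro _ hq
    obtain ⟨⟨i, j⟩, hij, rfl⟩ := mem_image.1 hq
    simp only [Sg, mem_sigma, mem_Icc, mem_range] at hij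
    simp only [e, mem_product, mem_Icc]
    omega
  calc _ = ∑ σ ∈ Sg, g (e σ).1 (e σ).2 := sum_sigma' _ _ _
    _ = ∑ q ∈ Sg.image e, g q.1 q.2 := (sum_image (f := fun q => g q.1 q.2) hinj).symm
    _ ≤ ∑ q ∈ Icc 1 t ×ˢ Icc 1 w, g q.1 q.2 :=
        sum_le_sum_of_subset_of_nonneg hmaps fun q _ _ => hg _ _
    _ = _ := sum_product' _ _ _

theorem ConcaveOn.sum_le_card_mul_of_sum_div_card_le {ι : Type*} {T : Finset ι} {ψ : ℝ → ℝ}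
    (hconc : ConcaveOn ℝ (Set.Ici 0) ψ) (hmono : MonotoneOn ψ (Set.Ici 0)) {p : ι → ℝ}
    (hp : ∀ q ∈ T, 0 ≤ p q) {ε : ℝ} (hε : (∑ q ∈ T, p q) / #T ≤ ε) :
    ∑ q ∈ T, ψ (p q) ≤ #T * ψ ε := by
  rcases T.eq_empty_or_nonempty with rfl | hT
  · simp
  have hcard : (0 : ℝ) < #T := by exact_mod_cast hT.card_pos
  have havg : ∑ q ∈ T, (#T : ℝ)⁻¹ • p q = (∑ q ∈ T, p q) / #T := by
    rw [← smul_sum, smul_eq_mul, inv_mul_eq_div]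
  have havg_nonneg : 0 ≤ (∑ q ∈ T, p q) / #T := div_nonneg (sum_nonneg hp) hcard.le
  have hjensen := hconc.le_map_sum (t := T) (w := fun _ => (#T : ℝ)⁻¹) (p := p)
    (fun _ _ => inv_nonneg.2 hcard.le) (by simp [hcard.ne']) hp
  rw [havg, ← smul_sum, smul_eq_mul, inv_mul_le_iff₀ hcard] at hjensen
  exact hjensen.trans <| mul_le_mul_of_nonneg_left
    (hmono havg_nonneg (havg_nonneg.trans hε) hε) hcard.le

theorem performance_bound_each_window_general {X : Type*} [MeasurableSpace X]
    (S : X → Measure X) (hS : ∀ x, IsProbabilityMeasure (S x))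
    (d : X → X → ℝ) (hd : ∀ a b, 0 ≤ d a b)
    (ψ : ℝ → ℝ) (hψ01 : ∀ a, 0 ≤ a → ψ a ∈ Set.Icc (0 : ℝ) 1)
    (hψconc : ConcaveOn ℝ (Set.Ici 0) ψ)
    (hψmono : MonotoneOn ψ (Set.Ici 0))
    (hTV : ∀ a b : X, tvDist (S a) (S b) ≤ ψ (d a b))
    (w t : ℕ)
    (f : (i : ℕ) → (Fin (min i w) → X) → ℝ)
    (hf : ∀ i, Measurable (f i))
    (hf01 : ∀ i y, f i y ∈ Set.Icc (0 : ℝ) 1)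
    (x : ℕ → X) (xa : ℕ → ℕ → X) (ε : ℝ)
    (hconstraint :
      (∑ i ∈ Finset.Icc 1 t, ∑ k ∈ Finset.Icc 1 w, d (x i) (xa i k)) / ((w : ℝ) * (t : ℝ)) ≤ ε) :
    |(∑ i ∈ Finset.Icc 1 t, smoothed S (f i) (window x w i)) / (t : ℝ) -
        (∑ i ∈ Finset.Icc 1 t, smoothed S (f i) (windowAdv xa w i)) / (t : ℝ)| ≤
      (w : ℝ) * ψ ε := by
  set g : ℕ → ℕ → ℝ := fun m k => ψ (d (x m) (xa m k))
  have hε : 0 ≤ ε := (div_nonneg (sum_nonneg fun _ _ => sum_nonneg fun _ _ => hd _ _)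
    (by positivity)).trans hconstraint
  have hwindow (i : ℕ) :
      |smoothed S (f i) (window x w i) - smoothed S (f i) (windowAdv xa w i)| ≤
        ∑ j ∈ range (min i w), g (i - min i w + 1 + j) (min i w - j) := by
    rw [← Fin.sum_univ_eq_sum_range]
    exact (abs_integral_pi_sub_le_sum_tvDist _ _ (hf i) (hf01 i)).trans
      (sum_le_sum fun j _ => hTV _ _)
  have hjensen : ∑ m ∈ Icc 1 t, ∑ k ∈ Icc 1 w, g m k ≤ t * w * ψ ε := by
    simpa [sum_product, mul_comm] using hψconc.sum_le_card_mul_of_sum_div_card_le hψmono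
      (T := Icc 1 t ×ˢ Icc 1 w) (fun q _ => hd (x q.1) (xa q.1 q.2))
      (by simpa [sum_product, mul_comm] using hconstraint)
  rw [div_sub_div_same, ← sum_sub_distrib, abs_div, Nat.abs_cast]
  refine div_le_of_le_mul₀ t.cast_nonneg (mul_nonneg w.cast_nonneg (hψ01 ε hε).1) ?_
  calc _ ≤ ∑ i ∈ Icc 1 t,
        |smoothed S (f i) (window x w i) - smoothed S (f i) (windowAdv xa w i)| :=
        abs_sum_le_sum_abs _ _
    _ ≤ ∑ i ∈ Icc 1 t, ∑ j ∈ range (min i w), g (i - min i w + 1 + j) (min i w - j) :=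
        sum_le_sum fun i _ => hwindow i
    _ ≤ ∑ m ∈ Icc 1 t, ∑ k ∈ Icc 1 w, g m k :=
        sum_sum_window_le_sum_sum (g := g) (fun _ _ => (hψ01 _ (hd _ _)).1) w t
    _ ≤ t * w * ψ ε := hjensen
    _ = w * ψ ε * t := by ring

/-- Theorem 2 of the paper: in the re-attack threat model, if the average
perturbation size `(1/(w·t)) ∑_{i=1}^t ∑_{k=1}^w d(x_i, x_i^k)` is at most `ε`, then
`|Z̃ − Z̃'| ≤ w · ψ(ε)`.  Since this holds for every perturbation satisfying the constraint,
it holds in particular for the infimum `Z̃_ε`. -/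
theorem performance_bound_each_window {X : Type*} [MeasurableSpace X]
    (S : X → Measure X) (hS : ∀ x, IsProbabilityMeasure (S x))
    (d : X → X → ℝ) (hd : ∀ a b, 0 ≤ d a b)
    (ψ : ℝ → ℝ) (hψ01 : ∀ a, 0 ≤ a → ψ a ∈ Set.Icc (0 : ℝ) 1)
    (hψconc : ConcaveOn ℝ (Set.Ici 0) ψ)
    (hψmono : MonotoneOn ψ (Set.Ici 0))
    (hTV : ∀ a b : X, tvDist (S a) (S b) ≤ ψ (d a b))
    (w t : ℕ) (hw : 1 ≤ w) (ht : 1 ≤ t)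
    (f : (i : ℕ) → (Fin (min i w) → X) → ℝ)
    (hf : ∀ i, Measurable (f i))
    (hf01 : ∀ i y, f i y ∈ Set.Icc (0 : ℝ) 1)
    (x : ℕ → X) (xa : ℕ → ℕ → X) (ε : ℝ) (hε : 0 ≤ ε)
    (hconstraint :
      (∑ i ∈ Finset.Icc 1 t, ∑ k ∈ Finset.Icc 1 w, d (x i) (xa i k)) / ((w : ℝ) * (t : ℝ)) ≤ ε) :
    |(∑ i ∈ Finset.Icc 1 t, smoothed S (f i) (window x w i)) / (t : ℝ) -
        (∑ i ∈ Finset.Icc 1 t, smoothed S (f i) (windowAdv xa w i)) / (t : ℝ)| ≤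
      (w : ℝ) * ψ ε :=
  performance_bound_each_window_general S hS d hd ψ hψ01 hψconc hψmono hTV w t f hf hf01 x xa ε
    hconstraint
end

section
/- For real means μ₁, μ₂ and σ > 0, the total variation distance between the one-dimensional Gaussian measures N(μ₁, σ²) and N(μ₂, σ²) equals 2·Φ(|μ₁ − μ₂|/(2σ)) − 1, where Φ is the cumulative distribution function of the standard normal distribution N(0,1). Equivalently, it equals erf(|μ₁ − μ₂|/(2√2·σ)), where erf is the Gauss error function erf(z) = (2/√π) ∫_0^z e^{−u²} du. -/
open MeasureTheory ProbabilityTheory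

/-- The standard normal cumulative distribution function `Φ(a) = N(0,1)((−∞, a])`. -/
noncomputable def stdNormalCDF (a : ℝ) : ℝ :=
  ((gaussianReal 0 1) (Set.Iic a)).toReal

/-- The Gauss error function `erf(z) = (2/√π) ∫_0^z e^{−u²} du`. -/
noncomputable def erf (z : ℝ) : ℝ :=
  (2 / Real.sqrt Real.pi) * ∫ u in (0 : ℝ)..z, Real.exp (-u ^ 2)

/-!
If `μ₁ ≤ μ₂`, the density of `N(μ₁, σ²)` dominates that of `N(μ₂, σ²)` exactly left of the
midpoint `m = (μ₁ + μ₂) / 2`. For two probability measures `μ, ν` and a set `S` on which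
`ν ≤ μ` while `μ ≤ ν` on `Sᶜ`, every measurable `A` has `|μ A - ν A| ≤ μ S - ν S`; with
`S = (-∞, m]` this gives `TV = Φ(t) - Φ(-t)`, `t = |μ₁ - μ₂| / (2σ)`. The symmetry of `N(0, 1)`
turns this into `2 Φ(t) - 1`, and the substitution `x = √2 u` in `∫_{-t}^{t} φ` into `erf (t / √2)`.
-/

open Real Set
open scoped NNReal

section TotalVariation

variable {X : Type*} [MeasurableSpace X] {μ ν : Measure X} {S A : Set X}

lemma tvDist_comm (μ ν : Measure X) : tvDist μ ν = tvDist ν μ := by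
  simp only [tvDist, abs_sub_comm]

lemma measureReal_le_of_restrict_le [IsFiniteMeasure μ] (h : ν.restrict S ≤ μ.restrict S)
    (hA : A ⊆ S) : ν.real A ≤ μ.real A := by
  have hle := h A
  rw [Measure.restrict_eq_self _ hA, Measure.restrict_eq_self _ hA] at hle
  exact ENNReal.toReal_mono (measure_ne_top μ A) hle

lemma measureReal_sub_le_of_restrict_le [IsFiniteMeasure μ] [IsFiniteMeasure ν]
    (hS : MeasurableSet S) (hA : MeasurableSet A) (hle : ν.restrict S ≤ μ.restrict S)
    (hge : μ.restrict Sᶜ ≤ ν.restrict Sᶜ) :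
    μ.real A - ν.real A ≤ μ.real S - ν.real S := by
  have hAS := measureReal_le_of_restrict_le hge (A := A \ S) fun _ hx ↦ hx.2
  have hSA := measureReal_le_of_restrict_le hle (A := S \ A) sdiff_subset
  rw [← measureReal_inter_add_sdiff hS (μ := μ) (s := A),
    ← measureReal_inter_add_sdiff hS (μ := ν) (s := A), inter_comm,
    ← measureReal_inter_add_sdiff hA (μ := μ) (s := S),
    ← measureReal_inter_add_sdiff hA (μ := ν) (s := S)]
  linarith

lemma tvDist_eq_of_restrict_le [IsProbabilityMeasure μ] [IsProbabilityMeasure ν]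
    (hS : MeasurableSet S) (hle : ν.restrict S ≤ μ.restrict S)
    (hge : μ.restrict Sᶜ ≤ ν.restrict Sᶜ) :
    tvDist μ ν = μ.real S - ν.real S := by
  have hbound : ∀ A : {A : Set X // MeasurableSet A},
      |μ.real A - ν.real A| ≤ μ.real S - ν.real S := by
    rintro ⟨A, hA⟩
    have hcompl := measureReal_sub_le_of_restrict_le hS hA.compl hle hge
    rw [probReal_compl_eq_one_sub hA, probReal_compl_eq_one_sub hA] at hcompl
    exact abs_le.mpr ⟨by linarith, measureReal_sub_le_of_restrict_le hS hA hle hge⟩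
  exact le_antisymm (ciSup_le hbound)
    (le_ciSup_of_le ⟨_, forall_mem_range.mpr hbound⟩ ⟨S, hS⟩ (le_abs_self _))

end TotalVariation

lemma intervalIntegral.integral_neg_self_eq_two_smul {E : Type*} [NormedAddCommGroup E]
    [NormedSpace ℝ E] {f : ℝ → E} (hf : f.Even) (hcont : Continuous f) (a : ℝ) :
    ∫ x in -a..a, f x = (2 : ℝ) • ∫ x in 0..a, f x := by
  have hleft : ∫ x in -a..0, f x = ∫ x in 0..a, f x := by
    simpa [hf _] using (intervalIntegral.integral_comp_neg (a := 0) (b := a) (f := f)).symm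
  rw [← intervalIntegral.integral_add_adjacent_intervals (b := 0) (hcont.intervalIntegrable _ _)
    (hcont.intervalIntegrable _ _), hleft, two_smul]

lemma gaussianPDFReal_le_of_dist_le {μ₁ μ₂ x : ℝ} (v : ℝ≥0) (h : dist x μ₁ ≤ dist x μ₂) :
    gaussianPDFReal μ₂ v x ≤ gaussianPDFReal μ₁ v x := by
  rw [Real.dist_eq, Real.dist_eq, ← sq_le_sq] at h
  unfold gaussianPDFReal
  gcongr

lemma gaussianReal_restrict_le_of_dist_le {μ₁ μ₂ : ℝ} {v : ℝ≥0} (hv : v ≠ 0) {S : Set ℝ}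
    (hS : MeasurableSet S) (h : ∀ x ∈ S, dist x μ₁ ≤ dist x μ₂) :
    (gaussianReal μ₂ v).restrict S ≤ (gaussianReal μ₁ v).restrict S := by
  rw [gaussianReal_of_var_ne_zero _ hv, gaussianReal_of_var_ne_zero _ hv,
    restrict_withDensity hS, restrict_withDensity hS]
  refine withDensity_mono ((ae_restrict_iff' hS).mpr (ae_of_all _ fun x hx ↦ ?_))
  exact ENNReal.ofReal_le_ofReal (gaussianPDFReal_le_of_dist_le v (h x hx))

lemma gaussianReal_eq_map_stdGaussian (μ σ : ℝ) :
    gaussianReal μ (σ ^ 2).toNNReal = (gaussianReal 0 1).map (fun x ↦ σ * x + μ) := by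
  have hscale := gaussianReal_map_const_mul (μ := 0) (v := 1) σ
  rw [mul_zero, mul_one] at hscale
  change _ = (gaussianReal 0 1).map ((· + μ) ∘ (σ * ·))
  rw [← Measure.map_map (by fun_prop) (by fun_prop), hscale, gaussianReal_map_add_const,
    zero_add]
  congr
  ext
  simp [sq_nonneg]

lemma gaussianReal_real_Iic (μ : ℝ) {σ : ℝ} (hσ : 0 < σ) (a : ℝ) :
    (gaussianReal μ (σ ^ 2).toNNReal).real (Iic a) = stdNormalCDF ((a - μ) / σ) := by
  rw [gaussianReal_eq_map_stdGaussian μ σ, map_measureReal_apply (by fun_prop) measurableSet_Iic]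
  congr 2
  ext x
  simp [le_div_iff₀ hσ, mul_comm, le_sub_iff_add_le]

lemma tvDist_gaussianReal_of_le {μ₁ μ₂ σ : ℝ} (hσ : 0 < σ) (h : μ₁ ≤ μ₂) :
    tvDist (gaussianReal μ₁ (σ ^ 2).toNNReal) (gaussianReal μ₂ (σ ^ 2).toNNReal) =
      stdNormalCDF ((μ₂ - μ₁) / (2 * σ)) - stdNormalCDF (-((μ₂ - μ₁) / (2 * σ))) := by
  have hv : (σ ^ 2).toNNReal ≠ 0 := by simpa using hσ.ne'
  have hleft : ∀ x ∈ Iic ((μ₁ + μ₂) / 2), dist x μ₁ ≤ dist x μ₂ := fun x hx ↦ by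
    have hx : x ≤ (μ₁ + μ₂) / 2 := hx
    rw [Real.dist_eq, Real.dist_eq, ← sq_le_sq]
    nlinarith
  have hright : ∀ x ∈ (Iic ((μ₁ + μ₂) / 2))ᶜ, dist x μ₂ ≤ dist x μ₁ := fun x hx ↦ by
    have hx : (μ₁ + μ₂) / 2 < x := not_le.mp hx
    rw [Real.dist_eq, Real.dist_eq, ← sq_le_sq]
    nlinarith
  rw [tvDist_eq_of_restrict_le measurableSet_Iic
      (gaussianReal_restrict_le_of_dist_le hv measurableSet_Iic hleft)
      (gaussianReal_restrict_le_of_dist_le hv measurableSet_Iic.compl hright),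
    gaussianReal_real_Iic μ₁ hσ, gaussianReal_real_Iic μ₂ hσ]
  congr 2 <;> field_simp <;> ring

lemma stdNormalCDF_neg (t : ℝ) : stdNormalCDF (-t) = 1 - stdNormalCDF t := by
  have := nullSingletonClass_gaussianReal (μ := 0) one_ne_zero
  have hreflect : (gaussianReal 0 1).real (Iic (-t)) = (gaussianReal 0 1).real (Ici t) := by
    conv_lhs => rw [← neg_zero, ← gaussianReal_map_neg]
    rw [map_measureReal_apply (by fun_prop) measurableSet_Iic]
    congr 1
    ext x
    simp
  rw [stdNormalCDF, stdNormalCDF, ← measureReal_def, ← measureReal_def, hreflect,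
    ← measureReal_congr Ioi_ae_eq_Ici, ← compl_Iic, probReal_compl_eq_one_sub measurableSet_Iic]

lemma stdNormalCDF_sub_stdNormalCDF (a b : ℝ) :
    stdNormalCDF b - stdNormalCDF a = ∫ x in a..b, gaussianPDFReal 0 1 x := by
  have hcdf (c : ℝ) : stdNormalCDF c = ∫ x in Iic c, gaussianPDFReal 0 1 x := by
    rw [stdNormalCDF, gaussianReal_apply_eq_integral 0 one_ne_zero,
      ENNReal.toReal_ofReal
        (setIntegral_nonneg measurableSet_Iic fun x _ ↦ gaussianPDFReal_nonneg 0 1 x)]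
  rw [hcdf, hcdf]
  exact intervalIntegral.integral_Iic_sub_Iic (integrable_gaussianPDFReal 0 1).integrableOn
    (integrable_gaussianPDFReal 0 1).integrableOn

lemma integral_neg_self_gaussianPDFReal (t : ℝ) :
    ∫ x in -t..t, gaussianPDFReal 0 1 x = erf (t / √2) := by
  have hsqrt2 : √2 ≠ 0 := by positivity
  have hpdf (u : ℝ) : gaussianPDFReal 0 1 (√2 * u) = (√(2 * π))⁻¹ * exp (-u ^ 2) := by
    simp only [gaussianPDFReal, NNReal.coe_one, mul_one, sub_zero, mul_pow,
      Real.sq_sqrt zero_le_two]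
    ring_nf
  have hconst : √2 * (√(2 * π))⁻¹ = (√π)⁻¹ := by
    rw [Real.sqrt_mul zero_le_two, mul_inv, ← mul_assoc, mul_inv_cancel₀ hsqrt2, one_mul]
  have heven : (fun u : ℝ ↦ exp (-u ^ 2)).Even := fun u ↦ by simp
  calc ∫ x in -t..t, gaussianPDFReal 0 1 x
      = √2 * ∫ u in -(t / √2)..t / √2, gaussianPDFReal 0 1 (√2 * u) := by
        rw [intervalIntegral.integral_comp_mul_left _ hsqrt2, smul_eq_mul, mul_neg,
          mul_div_cancel₀ _ hsqrt2, mul_inv_cancel_left₀ hsqrt2]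
    _ = (√π)⁻¹ * ∫ u in -(t / √2)..t / √2, exp (-u ^ 2) := by
        simp_rw [hpdf, intervalIntegral.integral_const_mul, ← mul_assoc, hconst]
    _ = erf (t / √2) := by
        rw [intervalIntegral.integral_neg_self_eq_two_smul heven (by fun_prop), smul_eq_mul, erf]
        ring

/-- for means `μ₁, μ₂` and `σ > 0`, the total variation distance between the
one-dimensional Gaussians `N(μ₁, σ²)` and `N(μ₂, σ²)` equals `2·Φ(|μ₁ − μ₂|/(2σ)) − 1`, or
equivalently `erf(|μ₁ − μ₂|/(2√2·σ))`. -/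
theorem tvDist_gaussianReal (μ₁ μ₂ σ : ℝ) (hσ : 0 < σ) :
    tvDist (gaussianReal μ₁ (Real.toNNReal (σ ^ 2))) (gaussianReal μ₂ (Real.toNNReal (σ ^ 2))) =
        2 * stdNormalCDF (|μ₁ - μ₂| / (2 * σ)) - 1 ∧
      tvDist (gaussianReal μ₁ (Real.toNNReal (σ ^ 2))) (gaussianReal μ₂ (Real.toNNReal (σ ^ 2))) =
        erf (|μ₁ - μ₂| / (2 * Real.sqrt 2 * σ)) := by
  have htv : tvDist (gaussianReal μ₁ (σ ^ 2).toNNReal) (gaussianReal μ₂ (σ ^ 2).toNNReal) =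
      stdNormalCDF (|μ₁ - μ₂| / (2 * σ)) - stdNormalCDF (-(|μ₁ - μ₂| / (2 * σ))) := by
    rcases le_total μ₁ μ₂ with h | h
    · rw [abs_sub_comm, abs_of_nonneg (sub_nonneg.mpr h)]
      exact tvDist_gaussianReal_of_le hσ h
    · rw [tvDist_comm, abs_of_nonneg (sub_nonneg.mpr h)]
      exact tvDist_gaussianReal_of_le hσ h
  refine ⟨by rw [htv, stdNormalCDF_neg]; ring, ?_⟩
  rw [htv, stdNormalCDF_sub_stdNormalCDF, integral_neg_self_gaussianPDFReal, div_div]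
  ring_nf
end
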